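/- arXiv:1809.11028 — 4 statements merged into one kernel-verified Lean document; each statement's English description precedes it below -/
import Mathlib

section
/- Let A = R[x, ξ] be the free graded-commutative algebra over a Q-algebra R with x in degree 0 and ξ in cohomological degree −2, with zero differential. Define the right connection ∇ on A by ∇(a ∂_x + b ∂_ξ) = −∂a/∂x − ∂b/∂ξ. Then contraction with dx ∧ dξ defines an isomorphism of complexes from the right de Rham complex DR^r(A, ∇) to the de Rham complex DR(A), and DR(A) is quasi-isomorphic to R (concentrated in degree 0). -/
/-!
Since `ξ` has even degree, `A` is the polynomial ring `MvPolynomial (Fin 2) R` with `X 0 = x`,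
`X 1 = ξ`, and the contraction isomorphism is checked levelwise by direct computation. The
content is the Poincaré lemma over a `ℚ`-algebra: every monomial has an antiderivative in each
variable, so closed 1-forms are exact (integrate `u` in `x`, then correct in `ξ`) and every 2-form
is exact, while a polynomial killed by both partial derivatives is constant because the factors
`m i + 1` in `coeff_pderiv` are invertible.
-/

open MvPolynomial

namespace MvPolynomial

variable {σ R : Type*} [CommRing R]

lemma pderiv_pderiv_comm (i j : σ) (p : MvPolynomial σ R) :
    pderiv i (pderiv j p) = pderiv j (pderiv i p) := by
  classical
  have h : ⁅pderiv i, pderiv j⁆ = (0 : Derivation R (MvPolynomial σ R) (MvPolynomial σ R)) :=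
    derivation_ext fun k => by
      rw [Derivation.commutator_apply]
      simp [Pi.single_apply, apply_ite]
  have hp := congr($h p)
  rwa [Derivation.commutator_apply, Derivation.zero_apply, sub_eq_zero] at hp

variable [Algebra ℚ R]

lemma algebraMap_inv_mul_natCast_add_one (n : ℕ) :
    algebraMap ℚ R ((n : ℚ) + 1)⁻¹ * ((n : R) + 1) = 1 := by
  rw [← map_natCast (algebraMap ℚ R), ← map_one (algebraMap ℚ R), ← map_add, ← map_mul,
    inv_mul_cancel₀ (by positivity)]

noncomputable def integ (i : σ) : MvPolynomial σ R →ₗ[R] MvPolynomial σ R :=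
  (basisMonomials σ R).constr R fun m =>
    monomial (m + Finsupp.single i 1) (algebraMap ℚ R ((m i : ℚ) + 1)⁻¹)

lemma integ_monomial (i : σ) (m : σ →₀ ℕ) (c : R) :
    integ i (monomial m c) =
      monomial (m + Finsupp.single i 1) (c * algebraMap ℚ R ((m i : ℚ) + 1)⁻¹) := by
  have h := (basisMonomials σ R).constr_basis R
    (fun m => monomial (m + Finsupp.single i 1) (algebraMap ℚ R ((m i : ℚ) + 1)⁻¹)) m
  rw [coe_basisMonomials] at h
  have hc : monomial m c = c • monomial m (1 : R) := by rw [smul_monomial, smul_eq_mul, mul_one]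
  rw [hc, integ, map_smul, h, smul_monomial, smul_eq_mul]

lemma pderiv_integ_self (i : σ) (p : MvPolynomial σ R) : pderiv i (integ i p) = p := by
  induction p using MvPolynomial.induction_on' with
  | monomial m c =>
    classical
    rw [integ_monomial, pderiv_monomial, add_tsub_cancel_right, Finsupp.add_apply,
      Finsupp.single_eq_same, Nat.cast_add, Nat.cast_one, mul_assoc,
      algebraMap_inv_mul_natCast_add_one, mul_one]
  | add p q hp hq => rw [map_add, map_add, hp, hq]

lemma pderiv_integ_of_ne {i j : σ} (h : i ≠ j) (p : MvPolynomial σ R) :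
    pderiv j (integ i p) = integ i (pderiv j p) := by
  classical
  induction p using MvPolynomial.induction_on' with
  | monomial m c =>
    have hexp : m + Finsupp.single i 1 - Finsupp.single j 1
        = m - Finsupp.single j 1 + Finsupp.single i 1 := by
      ext k
      simp only [Finsupp.tsub_apply, Finsupp.add_apply, Finsupp.single_apply]
      split_ifs <;> simp_all
    rw [integ_monomial, pderiv_monomial, pderiv_monomial, integ_monomial, hexp]
    simp only [Finsupp.add_apply, Finsupp.tsub_apply, Finsupp.single_apply, h, Ne.symm h,
      if_false, add_zero, tsub_zero]
    congr 1
    ring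
  | add p q hp hq => simp only [map_add, hp, hq]

lemma coeff_eq_zero_of_pderiv_eq_zero {i : σ} {p : MvPolynomial σ R} (h : pderiv i p = 0)
    {m : σ →₀ ℕ} (hi : m i ≠ 0) : coeff m p = 0 := by
  set m' := m - Finsupp.single i 1
  have hm : m' + Finsupp.single i 1 = m :=
    tsub_add_cancel_of_le (Finsupp.single_le_iff.mpr (Nat.one_le_iff_ne_zero.mpr hi))
  have hcoeff := coeff_pderiv (i := i) p m'
  rw [h, hm, coeff_zero] at hcoeff
  have hunit := IsUnit.of_mul_eq_one_right _ (algebraMap_inv_mul_natCast_add_one (R := R) (m' i))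
  exact hunit.mul_left_eq_zero.mp hcoeff.symm

lemma forall_pderiv_eq_zero_iff {p : MvPolynomial σ R} :
    (∀ i, pderiv i p = 0) ↔ ∃ r, p = C r := by
  classical
  refine ⟨fun h => ⟨coeff 0 p, ?_⟩, fun ⟨r, hr⟩ i => hr ▸ pderiv_C⟩
  ext m
  rw [coeff_C]
  split_ifs with hm
  · rw [hm]
  obtain ⟨i, hi⟩ : ∃ i, m i ≠ 0 := by
    by_contra! H
    exact hm (Finsupp.ext fun i => (H i).symm)
  exact coeff_eq_zero_of_pderiv_eq_zero (h i) hi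

lemma exists_pderiv_eq_of_pderiv_eq {i j : σ} (hij : i ≠ j) {u v : MvPolynomial σ R}
    (h : pderiv j u = pderiv i v) : ∃ a, pderiv i a = u ∧ pderiv j a = v := by
  set w := v - pderiv j (integ i u)
  have hw : pderiv i w = 0 := by
    rw [map_sub, ← h, pderiv_pderiv_comm, pderiv_integ_self, sub_self]
  refine ⟨integ i u + integ j w, ?_, ?_⟩
  · rw [map_add, pderiv_integ_self, pderiv_integ_of_ne (Ne.symm hij), hw, map_zero, add_zero]
  · rw [map_add, pderiv_integ_self, add_sub_cancel]

end MvPolynomial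

theorem stmt4 (R : Type*) [CommRing R] [Algebra ℚ R] :
    -- de Rham differential `d : A → Ω¹ = A·dx ⊕ A·dξ`
    let d0 : MvPolynomial (Fin 2) R → MvPolynomial (Fin 2) R × MvPolynomial (Fin 2) R :=
      fun a => (pderiv 0 a, pderiv 1 a)
    -- de Rham differential `d : Ω¹ → Ω² = A·dx∧dξ`
    let d1 : MvPolynomial (Fin 2) R × MvPolynomial (Fin 2) R → MvPolynomial (Fin 2) R :=
      fun uv => pderiv 0 uv.2 - pderiv 1 uv.1
    -- right de Rham differential on bivectors `c·∂x∂ξ`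
    let δ2 : MvPolynomial (Fin 2) R → MvPolynomial (Fin 2) R × MvPolynomial (Fin 2) R :=
      fun c => (pderiv 1 c, - pderiv 0 c)
    -- right de Rham differential on vector fields: `D^∇(a∂x + b∂ξ) = ∇(a∂x + b∂ξ)`
    let δ1 : MvPolynomial (Fin 2) R × MvPolynomial (Fin 2) R → MvPolynomial (Fin 2) R :=
      fun ab => - pderiv 0 ab.1 - pderiv 1 ab.2
    -- contraction with `dx ∧ dξ`, levelwise
    let φ2 : MvPolynomial (Fin 2) R → MvPolynomial (Fin 2) R := fun c => c
    let φ1 : MvPolynomial (Fin 2) R × MvPolynomial (Fin 2) R →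
        MvPolynomial (Fin 2) R × MvPolynomial (Fin 2) R := fun ab => (- ab.2, ab.1)
    let φ0 : MvPolynomial (Fin 2) R → MvPolynomial (Fin 2) R := fun f => - f
    -- contraction with `dx ∧ dξ` is an isomorphism of complexes `DR^r(A,∇) → DR(A)`:
    ((∀ c, d0 (φ2 c) = φ1 (δ2 c)) ∧
     (∀ ab, d1 (φ1 ab) = φ0 (δ1 ab)) ∧
     Function.Bijective φ2 ∧ Function.Bijective φ1 ∧ Function.Bijective φ0) ∧
    -- and `DR(A)` is quasi-isomorphic to `R`, concentrated in degree 0: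
    (Function.Injective (C : R → MvPolynomial (Fin 2) R) ∧
     (∀ a, d0 a = 0 ↔ ∃ r : R, a = C r) ∧
     (∀ uv, d1 uv = 0 → ∃ a, d0 a = uv) ∧
     (∀ w, ∃ uv, d1 uv = w)) := by
  intro d0 d1 δ2 δ1 φ2 φ1 φ0
  have hd0 : ∀ a, d0 a = 0 ↔ ∀ i, pderiv i a = 0 := fun a => by
    simp [d0, Prod.ext_iff, Fin.forall_fin_two]
  refine ⟨⟨fun c => ?_, fun ab => ?_, Function.bijective_id, ?_, neg_bijective⟩,
    C_injective _ _, fun a => (hd0 a).trans forall_pderiv_eq_zero_iff, fun uv h => ?_,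
    fun w => ⟨(0, integ 0 w), by simp [d1, pderiv_integ_self]⟩⟩
  · simp [d0, φ2, φ1, δ2]
  · simp only [d1, φ1, φ0, δ1, map_neg]
    ring
  · exact Function.bijective_iff_has_inverse.mpr
      ⟨fun ab => (ab.2, -ab.1), fun ab => by simp [φ1], fun ab => by simp [φ1]⟩
  · obtain ⟨a, ha0, ha1⟩ := exists_pderiv_eq_of_pderiv_eq zero_ne_one (sub_eq_zero.mp h).symm
    exact ⟨a, Prod.ext ha0 ha1⟩
end

section
/- Let A = R[x, x^{-1}, ξ] over a Q-algebra R, with x invertible of degree 0 and ξ of cohomological degree −2, zero differential. Equip A with the right connection ∇_2(a∂_x + b∂_ξ) = ∂a/∂x + ∂b/∂ξ and the nondegenerate Poisson bivector π = x^{-1} ∂_ξ ∂_x. Then the class [D^∇_2(π)] = [x^{-2} ∂_ξ] in the Poisson cohomology H^1(T_π Pol(A/R,−2)) corresponds, under the compatibility isomorphism μ(−,π), to the class [x^{-1}dx] ∈ H^1(DR(A/R)) ≅ H^1_{dR}(𝔾_m/R), which is nonzero when R ≠ 0 is a Q-algebra. -/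
/-!  STATEMENT 6: Let `A = R[x, x⁻¹, ξ]` (x invertible of degree 0, ξ of degree −2, zero
differential), with right connection `∇₂(a∂x + b∂ξ) = ∂a/∂x + ∂b/∂ξ` and the
non-degenerate Poisson bivector `π = x⁻¹ ∂ξ ∂x`.  Then the obstruction class
`[D^∇₂(π)] = [x⁻² ∂ξ]` in Poisson cohomology corresponds under the compatibility map
`μ(−, π)` to the class `[x⁻¹ dx] ∈ H¹(DR(A/R)) ≅ H¹_{dR}(𝔾ₘ/R)`, which is nonzero
when `R ≠ 0`.

We model `A = Polynomial (LaurentPolynomial R)` with `ξ` the outer variable and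
`x = T 1` the Laurent variable; `∂x` differentiates coefficients, `∂ξ = derivative`.
1-forms `u dx + v dξ` are pairs `(u,v)`; a bivector `c ∂ξ∂x` is its coefficient `c`;
contraction is `c∂ξ∂x ⌟ (u dx + v dξ) = −c·v ∂x + c·u ∂ξ`, i.e. `(−c*v, c*u)`; and for
this connection `D^∇₂(c ∂ξ∂x) = (∂ξ c) ∂x − (∂x c) ∂ξ`. -/

open LaurentPolynomial Polynomial

/-- The derivative `∂/∂x` on Laurent polynomials. -/
noncomputable def lderiv (R : Type*) [CommRing R] (f : LaurentPolynomial R) :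
    LaurentPolynomial R :=
  Finsupp.sum f.coeff fun n a => n • (LaurentPolynomial.C a * T (n - 1))

/-- The derivative `∂/∂x` on `A = R[x,x⁻¹][ξ]`, acting on coefficients. -/
noncomputable def dX (R : Type*) [CommRing R] (p : Polynomial (LaurentPolynomial R)) :
    Polynomial (LaurentPolynomial R) :=
  p.sum fun k c => Polynomial.C (lderiv R c) * Polynomial.X ^ k

/-!
The class of `x⁻¹ dx` is nonzero because `x⁻¹` has no antiderivative: the derivative of
`a xⁿ` is `n a xⁿ⁻¹`, whose `x⁻¹`-coefficient vanishes (it is `0 · a` for `n = 0`). Since `∂x`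
acts on `A = R[x,x⁻¹][ξ]` coefficientwise in `ξ`, the same holds for `A`. The
other two claims are direct computations with `∂x x⁻¹ = -x⁻²`.
-/

section Derivatives

variable (R : Type*) [CommRing R]

@[simp]
theorem lderiv_zero : lderiv R 0 = 0 := by
  simp [lderiv]

theorem lderiv_T (n : ℤ) : lderiv R (T n) = n • T (n - 1) := by
  rw [lderiv, T, AddMonoidAlgebra.coeff_single, Finsupp.sum_single_index] <;> simp

theorem coeff_lderiv_neg_one (f : LaurentPolynomial R) : (lderiv R f).coeff (-1) = 0 := by
  rw [lderiv, Finsupp.sum, AddMonoidAlgebra.coeff_sum, Finsupp.finsetSum_apply]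
  refine Finset.sum_eq_zero fun n _ => ?_
  rcases eq_or_ne n 0 with rfl | hn
  · simp
  · rw [← single_eq_C_mul_T, AddMonoidAlgebra.smul_single, AddMonoidAlgebra.coeff_single,
      Finsupp.single_eq_of_ne' (by omega)]

theorem lderiv_ne_T_neg_one [Nontrivial R] (f : LaurentPolynomial R) :
    lderiv R f ≠ T (-1) := fun h => by
  simpa [h] using coeff_lderiv_neg_one R f

theorem dX_C (f : LaurentPolynomial R) : dX R (Polynomial.C f) = Polynomial.C (lderiv R f) := by
  rw [dX, Polynomial.sum_C_index] <;> simp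

theorem coeff_dX (p : Polynomial (LaurentPolynomial R)) (k : ℕ) :
    (dX R p).coeff k = lderiv R (p.coeff k) := by
  simp only [dX, Polynomial.sum, Polynomial.finsetSum_coeff, Polynomial.coeff_C_mul,
    Polynomial.coeff_X_pow, mul_ite, mul_one, mul_zero, Finset.sum_ite_eq]
  split_ifs with h
  · rfl
  · rw [Polynomial.notMem_support_iff.mp h, lderiv_zero]

theorem dX_ne_C_T_neg_one [Nontrivial R] (a : Polynomial (LaurentPolynomial R)) :
    dX R a ≠ Polynomial.C (T (-1)) := fun h => by
  apply lderiv_ne_T_neg_one R (a.coeff 0)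
  rw [← coeff_dX, h, Polynomial.coeff_C_zero]

end Derivatives

theorem stmt6_general (R : Type*) [CommRing R] :
    -- `c = x⁻¹` is the coefficient of the Poisson bivector `π = x⁻¹ ∂ξ∂x`
    let c : Polynomial (LaurentPolynomial R) := Polynomial.C (T (-1))
    -- `ω = x⁻¹ dx`
    let ω : Polynomial (LaurentPolynomial R) × Polynomial (LaurentPolynomial R) :=
      (Polynomial.C (T (-1)), 0)
    -- `D^∇₂(π)` corresponds to `μ(ω, π) = π ⌟ ω` (both equal `x⁻² ∂ξ`):
    ((Polynomial.derivative c, - dX R c) = (- c * ω.2, c * ω.1)) ∧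
    -- `ω` is a de Rham cocycle:
    (dX R ω.2 - Polynomial.derivative ω.1 = 0) ∧
    -- whose class is nonzero in `H¹(DR(A/R))` when `R ≠ 0`:
    (Nontrivial R → ¬ ∃ a : Polynomial (LaurentPolynomial R),
      dX R a = ω.1 ∧ Polynomial.derivative a = ω.2) := by
  intro c ω
  refine ⟨Prod.ext (by simp [c, ω]) ?_, ?_, fun _ ⟨a, ha, _⟩ => dX_ne_C_T_neg_one R a ha⟩
  · change -dX R (Polynomial.C (T (-1))) = Polynomial.C (T (-1)) * Polynomial.C (T (-1))
    rw [dX_C, lderiv_T, ← Polynomial.C_mul, ← T_add]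
    norm_num
  · simpa [ω] using dX_C R 0

theorem stmt6 (R : Type*) [CommRing R] [Algebra ℚ R] :
    -- `c = x⁻¹` is the coefficient of the Poisson bivector `π = x⁻¹ ∂ξ∂x`
    let c : Polynomial (LaurentPolynomial R) := Polynomial.C (T (-1))
    -- `ω = x⁻¹ dx`
    let ω : Polynomial (LaurentPolynomial R) × Polynomial (LaurentPolynomial R) :=
      (Polynomial.C (T (-1)), 0)
    -- `D^∇₂(π)` corresponds to `μ(ω, π) = π ⌟ ω` (both equal `x⁻² ∂ξ`):
    ((Polynomial.derivative c, - dX R c) = (- c * ω.2, c * ω.1)) ∧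
    -- `ω` is a de Rham cocycle:
    (dX R ω.2 - Polynomial.derivative ω.1 = 0) ∧
    -- whose class is nonzero in `H¹(DR(A/R))` when `R ≠ 0`:
    (Nontrivial R → ¬ ∃ a : Polynomial (LaurentPolynomial R),
      dX R a = ω.1 ∧ Polynomial.derivative a = ω.2) :=
  stmt6_general R
end

section
/- Let A be a CDGA over R with a flat right connection ∇ = (∇_2, ∇_3, ...). Given a strict (−2)-shifted Poisson structure π ∈ Hom_A(Ω^2_A, A)[2] (satisfying δπ = 0 and [π,π] = 0 for the Schouten bracket) with D^∇(π) computed in DR^r(A,∇), the element ħπ is a Maurer–Cartan element of the L∞-algebra (ħ DR^r(A,∇)⟦ħ⟧[−1], [−]_∇) (i.e. satisfies the quantum master equation D^∇(e^{ħπ}) = 0) if and only if D^∇_k((ħπ)^n/n!) summed appropriately vanishes; in particular when ∇ has no higher terms (∇_k = 0 for k ≥ 3) and ∇π = 0, then ħπ solves the quantum master equation. -/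
/-! Since `□` is a differential operator of order at most two, `□(π^(m+3))` is a combination of
`□(π^(m+2))`, `□(π^(m+1))` and `□(π^m)`; the three seeds `□1 = 0`, `□π = 0` and
`□(π²) = [π,π] + 2π□π = 0` therefore propagate to `□(π^n) = 0` for every `n`. As `□` acts on
`exp(ħπ)` coefficientwise with invertible factors `1/n!`, this is exactly the quantum master
equation. -/

open scoped Nat

/-- The vanishing of the third Koszul bracket of `D`, i.e. `D` has order at most two. -/
def IsDiffOpOrderLeTwo {B : Type*} [CommRing B] (D : B → B) : Prop :=
  ∀ a b c x : B,
    D (a * b * c * x) - a * D (b * c * x) - b * D (a * c * x)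
      - c * D (a * b * x) + a * b * D (c * x) + a * c * D (b * x)
      + b * c * D (a * x) - a * b * c * D x = 0

namespace IsDiffOpOrderLeTwo

variable {B : Type*} [CommRing B] {D : B → B}

theorem map_pow_add_three (hD : IsDiffOpOrderLeTwo D) (π : B) (m : ℕ) :
    D (π ^ (m + 3)) =
      3 * π * D (π ^ (m + 2)) - 3 * π ^ 2 * D (π ^ (m + 1)) + π ^ 3 * D (π ^ m) := by
  have h := hD π π π (π ^ m)
  rw [show π * π * π * π ^ m = π ^ (m + 3) by ring, show π * π * π ^ m = π ^ (m + 2) by ring,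
    show π * π ^ m = π ^ (m + 1) by ring] at h
  linear_combination h

theorem map_pow_eq_zero (hD : IsDiffOpOrderLeTwo D) {π : B} (h₀ : D 1 = 0) (h₁ : D π = 0)
    (h₂ : D (π * π) = 0) (n : ℕ) : D (π ^ n) = 0 := by
  suffices ∀ m, D (π ^ m) = 0 ∧ D (π ^ (m + 1)) = 0 ∧ D (π ^ (m + 2)) = 0 from (this n).1
  intro m
  induction m with
  | zero => simpa [pow_two] using ⟨h₀, h₁, h₂⟩
  | succ m ih =>
    obtain ⟨hm, hm₁, hm₂⟩ := ih
    exact ⟨hm₁, hm₂, by simp [hD.map_pow_add_three, hm, hm₁, hm₂]⟩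

end IsDiffOpOrderLeTwo

theorem PowerSeries.mk_map_inv_factorial_smul_eq_zero_iff {M B : Type*} [AddCommGroup M]
    [Module ℚ M] [Semiring B] [Module ℚ B] (f : M →ₗ[ℚ] B) (x : ℕ → M) :
    PowerSeries.mk (fun n => f ((n ! : ℚ)⁻¹ • x n)) = 0 ↔ ∀ n, f (x n) = 0 := by
  simp [PowerSeries.ext_iff, Nat.factorial_ne_zero]

theorem stmt9_general
    (B : Type*) [CommRing B] [Algebra ℚ B]
    (box : B →ₗ[ℚ] B)
    (hone : box 1 = 0)
    -- `∇` has no higher terms: `□` is a differential operator of order ≤ 2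
    (horder : ∀ a b c x : B,
      box (a * b * c * x) - a * box (b * c * x) - b * box (a * c * x)
        - c * box (a * b * x) + a * b * box (c * x) + a * c * box (b * x)
        + b * c * box (a * x) - a * b * c * box x = 0)
    (π : B)
    -- `D^∇(π) = 0` (strictness: `δπ = 0` and `∇π = 0`)
    (hδπ : box π = 0)
    -- `[π,π] = 0`: the Schouten/BV bracket of `π` with itself vanishes
    (hbr : box (π * π) - box π * π - π * box π = 0) :
    -- `□` extended coefficientwise to `B⟦ħ⟧`
    let boxh : PowerSeries B → PowerSeries B :=
      fun f => PowerSeries.mk fun n => box (PowerSeries.coeff n f)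
    -- `exp(ħπ)`
    let expπ : PowerSeries B := PowerSeries.mk fun n => (n.factorial : ℚ)⁻¹ • π ^ n
    -- the QME holds iff each `□(π^n)` vanishes, and it does hold:
    (boxh expπ = 0 ↔ ∀ n : ℕ, box (π ^ n) = 0) ∧ boxh expπ = 0 := by
  intro boxh expπ
  have hqme : boxh expπ = 0 ↔ ∀ n : ℕ, box (π ^ n) = 0 := by
    simpa only [boxh, expπ, PowerSeries.coeff_mk] using
      PowerSeries.mk_map_inv_factorial_smul_eq_zero_iff box (π ^ ·)
  have hππ : box (π * π) = 0 := by simpa [hδπ] using hbr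
  exact ⟨hqme, hqme.mpr (IsDiffOpOrderLeTwo.map_pow_eq_zero horder hone hδπ hππ)⟩

theorem stmt9
    (B : Type*) [CommRing B] [Algebra ℚ B]
    (box : B →ₗ[ℚ] B)
    -- flatness: `□² = 0`
    (hsq : ∀ x, box (box x) = 0)
    (hone : box 1 = 0)
    -- `∇` has no higher terms: `□` is a differential operator of order ≤ 2
    (horder : ∀ a b c x : B,
      box (a * b * c * x) - a * box (b * c * x) - b * box (a * c * x)
        - c * box (a * b * x) + a * b * box (c * x) + a * c * box (b * x)
        + b * c * box (a * x) - a * b * c * box x = 0)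
    (π : B)
    -- `D^∇(π) = 0` (strictness: `δπ = 0` and `∇π = 0`)
    (hδπ : box π = 0)
    -- `[π,π] = 0`: the Schouten/BV bracket of `π` with itself vanishes
    (hbr : box (π * π) - box π * π - π * box π = 0) :
    -- `□` extended coefficientwise to `B⟦ħ⟧`
    let boxh : PowerSeries B → PowerSeries B :=
      fun f => PowerSeries.mk fun n => box (PowerSeries.coeff n f)
    -- `exp(ħπ)`
    let expπ : PowerSeries B := PowerSeries.mk fun n => (n.factorial : ℚ)⁻¹ • π ^ n
    -- the QME holds iff each `□(π^n)` vanishes, and it does hold: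
    (boxh expπ = 0 ↔ ∀ n : ℕ, box (π ^ n) = 0) ∧ boxh expπ = 0 :=
  stmt9_general B box hone horder π hδπ hbr
end

section
/- Let L be a pro-nilpotent L∞-algebra over a Q-algebra with all brackets [−]_n for n ≥ 2 zero except possibly certain higher operations governed by a square-zero operator, arising as L = ħB⟦ħ⟧[−1] for a complete filtered BV∞-algebra B with differential □. Then the map S ↦ e^S − 1 defines a bijection between Maurer–Cartan elements of (L, [−]_□) and Maurer–Cartan elements of the abelian L∞-algebra (L; □, 0, 0, …), i.e. elements T with □(1 + T) = 0. -/
/-!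
Expanding the iterated commutator `[⋯[□, S], …, S]` binomially turns the Maurer–Cartan sum
`Σ_n [S,…,S]_n / n!` into the Cauchy product of `e^{-S}` and `□(e^S)`, so `S` is Maurer–Cartan
exactly when `□(e^S) = 0`. It remains that `exp` is a bijection from `X·B⟦X⟧` onto `1 + X·B⟦X⟧`.
It turns sums into products, and `e^u ≡ 1 + u mod X^(k+1)` whenever `X^k ∣ u`; so `e^u = 1` forces
`u = 0`, and the iteration `s ↦ s + (1 + t - e^s)` gains one power of `X` at each step, its
`X`-adic limit being a logarithm of `1 + t`.
-/

open Finset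
open scoped Nat

theorem Nat.inv_factorial_smul_choose_smul {M : Type*} [AddCommGroup M] [Module ℚ M] {n : ℕ}
    {p : ℕ × ℕ} (hp : p ∈ antidiagonal n) (z : M) :
    (n ! : ℚ)⁻¹ • n.choose p.1 • z = (p.1 ! : ℚ)⁻¹ • (p.2 ! : ℚ)⁻¹ • z := by
  obtain ⟨i, j⟩ := p
  obtain rfl : i + j = n := HasAntidiagonal.mem_antidiagonal.1 hp
  rw [← Nat.cast_smul_eq_nsmul ℚ, smul_smul, smul_smul, Nat.cast_add_choose]
  congr 1
  field_simp

theorem Finset.Nat.sum_range_sum_antidiagonal {M : Type*} [AddCommMonoid M] (N : ℕ)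
    (F : ℕ × ℕ → M) :
    ∑ n ∈ range N, ∑ p ∈ antidiagonal n, F p
      = ∑ p ∈ (range N ×ˢ range N).filter (fun p : ℕ × ℕ => p.1 + p.2 < N), F p := by
  rw [← sum_fiberwise_of_maps_to (g := fun p : ℕ × ℕ => p.1 + p.2) (t := range N)
    (fun p hp => by simpa using (mem_filter.1 hp).2)]
  refine sum_congr rfl fun n hn => sum_congr ?_ fun _ _ => rfl
  ext ⟨i, j⟩
  simp only [HasAntidiagonal.mem_antidiagonal, mem_filter, mem_product, mem_range] at hn ⊢
  grind

section BracketMul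

variable (K : Type*) {S : Type*} [CommRing K] [CommRing S] [Algebra K S]

open LinearMap

noncomputable def bracketMul (f : S) : Module.End K (Module.End K S) :=
  mulRight K (mulLeft K f) - mulLeft K (mulLeft K f)

theorem bracketMul_apply (f : S) (D : Module.End K S) (x : S) :
    bracketMul K f D x = D (f * x) - f * D x :=
  rfl

theorem bracketMul_pow_apply_one (f : S) (D : Module.End K S) (n : ℕ) :
    (bracketMul K f ^ n) D 1
      = ∑ p ∈ antidiagonal n, n.choose p.1 • ((-f) ^ p.1 * D (f ^ p.2)) := by
  have hsplit : bracketMul K f = mulLeft K (mulLeft K (-f)) + mulRight K (mulLeft K f) := by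
    ext g x
    simp [bracketMul_apply, sub_eq_neg_add]
  rw [hsplit, (commute_mulLeft_right _ _).add_pow', LinearMap.sum_apply,
    LinearMap.sum_apply]
  refine sum_congr rfl fun p _ => ?_
  simp only [Module.End.mul_apply, LinearMap.smul_apply, pow_mulLeft, pow_mulRight, mulLeft_apply,
    mulRight_apply, mul_one]

end BracketMul

namespace PowerSeries

section FormalSum

variable {R : Type*} [CommRing R]

/-- The `X`-adic sum `∑ n, a n`; it is the true limit of the partial sums only when
`X ^ n ∣ a n` for all `n`. -/
noncomputable def formalSum (a : ℕ → R⟦X⟧) : R⟦X⟧ :=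
  mk fun k => ∑ n ∈ range (k + 1), coeff k (a n)

theorem coeff_formalSum (a : ℕ → R⟦X⟧) (k : ℕ) :
    coeff k (formalSum a) = ∑ n ∈ range (k + 1), coeff k (a n) :=
  coeff_mk _ _

theorem eq_of_forall_X_pow_dvd_sub {f g : R⟦X⟧} (h : ∀ N, X ^ N ∣ f - g) : f = g := by
  ext d
  simpa [sub_eq_zero] using X_pow_dvd_iff.1 (h (d + 1)) d (by omega)

theorem X_pow_dvd_formalSum_sub_sum {a : ℕ → R⟦X⟧} (ha : ∀ n, X ^ n ∣ a n) (N : ℕ) :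
    X ^ N ∣ formalSum a - ∑ n ∈ range N, a n := by
  refine X_pow_dvd_iff.2 fun k hk => ?_
  rw [map_sub, coeff_formalSum, map_sum, sub_eq_zero]
  refine sum_subset (range_subset_range.2 (by omega)) fun n hn hn' => ?_
  simp only [mem_range] at hn hn'
  exact X_pow_dvd_iff.1 (ha n) k (by omega)

theorem formalSum_eq_of_forall_X_pow_dvd_sub {a : ℕ → R⟦X⟧} (ha : ∀ n, X ^ n ∣ a n)
    {f : R⟦X⟧} (h : ∀ N, X ^ N ∣ f - ∑ n ∈ range N, a n) : formalSum a = f :=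
  eq_of_forall_X_pow_dvd_sub fun N => by
    simpa using dvd_sub (X_pow_dvd_formalSum_sub_sum ha N) (h N)

theorem map_formalSum {F : Type*} [FunLike F R⟦X⟧ R⟦X⟧] [AddMonoidHomClass F R⟦X⟧ R⟦X⟧]
    (D : F) (hD : ∀ n g, X ^ n ∣ g → X ^ n ∣ D g) {a : ℕ → R⟦X⟧} (ha : ∀ n, X ^ n ∣ a n) :
    D (formalSum a) = formalSum (fun n => D (a n)) :=
  (formalSum_eq_of_forall_X_pow_dvd_sub (fun n => hD n _ (ha n)) fun N => by
    simpa [map_sub, map_sum] using hD N _ (X_pow_dvd_formalSum_sub_sum ha N)).symm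

theorem formalSum_mul {a b : ℕ → R⟦X⟧} (ha : ∀ n, X ^ n ∣ a n) (hb : ∀ n, X ^ n ∣ b n) :
    formalSum a * formalSum b = formalSum (fun n => ∑ p ∈ antidiagonal n, a p.1 * b p.2) := by
  have hab : ∀ n : ℕ, ∀ p ∈ antidiagonal n, X ^ n ∣ a p.1 * b p.2 := fun n p hp => by
    rw [← HasAntidiagonal.mem_antidiagonal.1 hp, pow_add]
    exact mul_dvd_mul (ha _) (hb _)
  refine (formalSum_eq_of_forall_X_pow_dvd_sub (fun n => dvd_sum (hab n)) fun N => ?_).symm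
  have htrunc :
      X ^ N ∣ formalSum a * formalSum b - (∑ n ∈ range N, a n) * ∑ n ∈ range N, b n := by
    rw [show ∀ f g f' g' : R⟦X⟧, f * g - f' * g' = (f - f') * g + f' * (g - g') by
      intros; ring]
    exact dvd_add (dvd_mul_of_dvd_left (X_pow_dvd_formalSum_sub_sum ha N) _)
      (dvd_mul_of_dvd_right (X_pow_dvd_formalSum_sub_sum hb N) _)
  have hsplit : (∑ n ∈ range N, a n) * ∑ n ∈ range N, b n
      = ∑ n ∈ range N, ∑ p ∈ antidiagonal n, a p.1 * b p.2
        + ∑ p ∈ (range N ×ˢ range N).filter (fun p : ℕ × ℕ => ¬ p.1 + p.2 < N),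
            a p.1 * b p.2 := by
    rw [sum_mul_sum, ← sum_product', Finset.Nat.sum_range_sum_antidiagonal,
      sum_filter_add_sum_filter_not]
  have htail : X ^ N ∣ ∑ p ∈ (range N ×ˢ range N).filter (fun p : ℕ × ℕ => ¬ p.1 + p.2 < N),
      a p.1 * b p.2 :=
    dvd_sum fun p hp => (pow_dvd_pow X (by simpa using (mem_filter.1 hp).2)).trans
      (hab _ p (HasAntidiagonal.mem_antidiagonal.2 rfl))
  rw [hsplit, sub_add_eq_sub_sub] at htrunc
  simpa using dvd_add htrunc htail

end FormalSum

section LmapCoeffs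

variable {S R : Type*} [Semiring S] [Semiring R] [Module S R]

noncomputable def lmapCoeffs (l : R →ₗ[S] R) : R⟦X⟧ →ₗ[S] R⟦X⟧ where
  toFun f := mk fun n => l (coeff n f)
  map_add' f g := by ext; simp
  map_smul' c f := by ext; simp

theorem X_pow_dvd_lmapCoeffs (l : R →ₗ[S] R) {n : ℕ} {g : R⟦X⟧} (hg : X ^ n ∣ g) :
    X ^ n ∣ lmapCoeffs l g := by
  rw [X_pow_dvd_iff] at hg ⊢
  intro m hm
  simp [lmapCoeffs, hg m hm]

end LmapCoeffs

section Exp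

variable {A : Type*} [CommRing A] [Algebra ℚ A]

noncomputable def expOf (f : A⟦X⟧) : A⟦X⟧ :=
  formalSum fun n => (n ! : ℚ)⁻¹ • f ^ n

theorem X_pow_dvd_inv_factorial_smul_pow {f : A⟦X⟧} (hf : X ∣ f) (n : ℕ) :
    X ^ n ∣ (n ! : ℚ)⁻¹ • f ^ n := by
  rw [Algebra.smul_def]
  exact dvd_mul_of_dvd_right (pow_dvd_pow_of_dvd hf n) _

theorem expOf_add {f g : A⟦X⟧} (hf : X ∣ f) (hg : X ∣ g) :
    expOf (f + g) = expOf f * expOf g := by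
  rw [expOf, expOf, expOf, formalSum_mul (X_pow_dvd_inv_factorial_smul_pow hf)
    (X_pow_dvd_inv_factorial_smul_pow hg)]
  congr 1
  funext n
  rw [(Commute.all f g).add_pow', smul_sum]
  refine sum_congr rfl fun p hp => ?_
  rw [Nat.inv_factorial_smul_choose_smul hp, smul_mul_smul_comm, smul_smul]

theorem expOf_zero : expOf (0 : A⟦X⟧) = 1 := by
  ext k
  rw [expOf, coeff_formalSum, sum_range_succ']
  simp

theorem expOf_mul_expOf_neg {f : A⟦X⟧} (hf : X ∣ f) : expOf f * expOf (-f) = 1 := by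
  rw [← expOf_add hf (dvd_neg.2 hf), add_neg_cancel, expOf_zero]

theorem X_pow_succ_dvd_expOf_sub {u : A⟦X⟧} {k : ℕ} (hu : X ∣ u) (hk : X ^ k ∣ u) :
    X ^ (k + 1) ∣ expOf u - (1 + u) := by
  have htail := (pow_dvd_pow X (k + 1).le_succ).trans
    (X_pow_dvd_formalSum_sub_sum (X_pow_dvd_inv_factorial_smul_pow hu) (k + 2))
  rw [sum_range_succ', sum_range_succ'] at htail
  have hquad : X ^ (k + 1) ∣ ∑ n ∈ range k, ((n + 2)! : ℚ)⁻¹ • u ^ (n + 2) := by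
    refine dvd_sum fun n _ => ?_
    rw [Algebra.smul_def, pow_succ, pow_succ u]
    exact dvd_mul_of_dvd_right (mul_dvd_mul (hk.trans (dvd_pow_self u n.succ_ne_zero)) hu) _
  convert dvd_add htail hquad using 1
  simp only [expOf, zero_add, Nat.factorial_zero, Nat.factorial_one, Nat.cast_one, inv_one,
    one_smul, pow_zero, pow_one]
  ring

theorem X_pow_dvd_expOf_sub_one {u : A⟦X⟧} {k : ℕ} (hu : X ∣ u) (hk : X ^ k ∣ u) :
    X ^ k ∣ expOf u - 1 := by
  convert dvd_add ((pow_dvd_pow X k.le_succ).trans (X_pow_succ_dvd_expOf_sub hu hk)) hk using 1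
  ring

theorem X_dvd_expOf_sub_one {u : A⟦X⟧} (hu : X ∣ u) : X ∣ expOf u - 1 := by
  simpa using X_pow_dvd_expOf_sub_one hu (k := 1) (by simpa using hu)

theorem eq_zero_of_expOf_eq_one {u : A⟦X⟧} (hu : X ∣ u) (h : expOf u = 1) : u = 0 := by
  have hdvd : ∀ N, X ^ N ∣ u := by
    intro N
    induction N with
    | zero => exact one_dvd u
    | succ N ih => simpa [h] using X_pow_succ_dvd_expOf_sub hu ih
  exact eq_of_forall_X_pow_dvd_sub (by simpa using hdvd)

theorem expOf_injOn {f g : A⟦X⟧} (hf : X ∣ f) (hg : X ∣ g) (h : expOf f = expOf g) :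
    f = g := by
  refine sub_eq_zero.1 (eq_zero_of_expOf_eq_one (dvd_sub hf hg) ?_)
  rw [sub_eq_add_neg, expOf_add hf (dvd_neg.2 hg), h, expOf_mul_expOf_neg hg]

noncomputable def logApprox (t : A⟦X⟧) : ℕ → A⟦X⟧
  | 0 => 0
  | k + 1 => logApprox t k + (1 + t - expOf (logApprox t k))

theorem X_dvd_one_add_sub_expOf {t s : A⟦X⟧} (ht : X ∣ t) (hs : X ∣ s) :
    X ∣ 1 + t - expOf s := by
  rw [show 1 + t - expOf s = t - (expOf s - 1) by ring]
  exact dvd_sub ht (X_dvd_expOf_sub_one hs)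

theorem X_dvd_logApprox {t : A⟦X⟧} (ht : X ∣ t) (k : ℕ) : X ∣ logApprox t k := by
  induction k with
  | zero => exact dvd_zero X
  | succ k ih => exact dvd_add ih (X_dvd_one_add_sub_expOf ht ih)

theorem X_pow_succ_dvd_one_add_sub_expOf_logApprox {t : A⟦X⟧} (ht : X ∣ t) (k : ℕ) :
    X ^ (k + 1) ∣ 1 + t - expOf (logApprox t k) := by
  induction k with
  | zero => simpa [logApprox, expOf_zero] using ht
  | succ k ih =>
    set s := logApprox t k
    set v := 1 + t - expOf s
    have hs : X ∣ s := X_dvd_logApprox ht k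
    have hv : X ∣ v := X_dvd_one_add_sub_expOf ht hs
    have herror : 1 + t - expOf (logApprox t (k + 1))
        = v * (1 - expOf s) - expOf s * (expOf v - (1 + v)) := by
      rw [logApprox, expOf_add hs hv]
      ring
    rw [herror, pow_succ]
    exact dvd_sub (mul_dvd_mul ih (dvd_sub_comm.1 (X_dvd_expOf_sub_one hs)))
      (dvd_mul_of_dvd_right (X_pow_succ_dvd_expOf_sub hv ih) _)

theorem exists_expOf_eq_one_add {t : A⟦X⟧} (ht : X ∣ t) : ∃ f, X ∣ f ∧ expOf f = 1 + t := by
  set c : ℕ → A⟦X⟧ := fun k => 1 + t - expOf (logApprox t k)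
  have hc : ∀ k, X ^ k ∣ c k := fun k =>
    (pow_dvd_pow X k.le_succ).trans (X_pow_succ_dvd_one_add_sub_expOf_logApprox ht k)
  have hpartial : ∀ N, logApprox t N = ∑ k ∈ range N, c k := by
    intro N
    induction N with
    | zero => rfl
    | succ N ih => rw [sum_range_succ, ← ih, logApprox]
  have hlim : ∀ N, X ^ N ∣ formalSum c - logApprox t N := fun N => by
    simpa [hpartial] using X_pow_dvd_formalSum_sub_sum hc N
  have hf : X ∣ formalSum c := (dvd_sub_left (X_dvd_logApprox ht 1)).1 (by simpa using hlim 1)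
  refine ⟨formalSum c, hf, eq_of_forall_X_pow_dvd_sub fun N => ?_⟩
  set s := logApprox t N
  have hs : X ∣ s := X_dvd_logApprox ht N
  have hsplit : expOf (formalSum c) = expOf s * expOf (formalSum c - s) := by
    rw [← expOf_add hs (dvd_sub hf hs), add_sub_cancel]
  rw [show expOf (formalSum c) - (1 + t) = expOf s * (expOf (formalSum c - s) - 1) - c N by
    rw [hsplit]; ring]
  exact dvd_sub (dvd_mul_of_dvd_right (X_pow_dvd_expOf_sub_one (dvd_sub hf hs) (hlim N)) _)
    (hc N)

end Exp

section MaurerCartan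

variable {A : Type*} [CommRing A] [Algebra ℚ A]

/-- `Σ_n [f, …, f]_D / n!`, where `[a₁, …, a_n]_D = [⋯[D, a₁], …, a_n](1)`. -/
noncomputable def mcSeries (D : Module.End ℚ A⟦X⟧) (f : A⟦X⟧) : A⟦X⟧ :=
  formalSum fun n => (n ! : ℚ)⁻¹ • (bracketMul ℚ f ^ n) D 1

theorem mcSeries_eq_expOf_neg_mul (D : Module.End ℚ A⟦X⟧)
    (hD : ∀ n g, X ^ n ∣ g → X ^ n ∣ D g) {f : A⟦X⟧} (hf : X ∣ f) :
    mcSeries D f = expOf (-f) * D (expOf f) := by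
  have hDexp : ∀ n, X ^ n ∣ D ((n ! : ℚ)⁻¹ • f ^ n) := fun n =>
    hD n _ (X_pow_dvd_inv_factorial_smul_pow hf n)
  unfold expOf
  rw [map_formalSum D hD (X_pow_dvd_inv_factorial_smul_pow hf),
    formalSum_mul (X_pow_dvd_inv_factorial_smul_pow (dvd_neg.2 hf)) hDexp, mcSeries]
  congr 1
  funext n
  rw [bracketMul_pow_apply_one, smul_sum]
  refine sum_congr rfl fun p hp => ?_
  rw [Nat.inv_factorial_smul_choose_smul hp, map_smul, smul_mul_smul_comm, smul_smul]

theorem bijOn_expOf_sub_one (D : Module.End ℚ A⟦X⟧) (hD : ∀ n g, X ^ n ∣ g → X ^ n ∣ D g) :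
    Set.BijOn (fun f => expOf f - 1) {f | coeff 0 f = 0 ∧ mcSeries D f = 0}
      {t | coeff 0 t = 0 ∧ D (1 + t) = 0} := by
  have hX : ∀ f : A⟦X⟧, X ∣ f ↔ coeff 0 f = 0 := fun f => by
    rw [X_dvd_iff, coeff_zero_eq_constantCoeff_apply]
  refine ⟨fun f ⟨hf, hmc⟩ => ⟨?_, ?_⟩, fun f ⟨hf, _⟩ g ⟨hg, _⟩ h => ?_, fun t ⟨ht, hDt⟩ => ?_⟩
  · exact (hX _).1 (X_dvd_expOf_sub_one ((hX f).2 hf))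
  · rw [add_sub_cancel, ← one_mul (D _), ← expOf_mul_expOf_neg ((hX f).2 hf), mul_assoc,
      ← mcSeries_eq_expOf_neg_mul D hD ((hX f).2 hf), hmc, mul_zero]
  · exact expOf_injOn ((hX f).2 hf) ((hX g).2 hg) (sub_left_inj.1 h)
  · obtain ⟨f, hf, hft⟩ := exists_expOf_eq_one_add ((hX t).2 ht)
    refine ⟨f, ⟨(hX f).1 hf, ?_⟩, by simp [hft]⟩
    rw [mcSeries_eq_expOf_neg_mul D hD hf, hft, hDt, mul_zero]

end MaurerCartan

end PowerSeries

theorem stmt16_general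
    (B : Type*) [CommRing B] [Algebra ℚ B]
    (box : B →ₗ[ℚ] B) :
    -- `□` extended coefficientwise to `B⟦ħ⟧`
    let boxh : PowerSeries B → PowerSeries B :=
      fun f => PowerSeries.mk fun n => box (PowerSeries.coeff (R := B) n f)
    -- the exponential of a power series with vanishing constant term
    let expPS : PowerSeries B → PowerSeries B :=
      fun f => PowerSeries.mk fun k =>
        ∑ n ∈ Finset.range (k + 1), (n.factorial : ℚ)⁻¹ • PowerSeries.coeff (R := B) k (f ^ n)
    -- the iterated commutators `[⋯[□, f], …, f]`
    let it : PowerSeries B → ℕ → PowerSeries B → PowerSeries B :=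
      fun f => Nat.rec (motive := fun _ => PowerSeries B → PowerSeries B)
        boxh (fun _ g x => g (f * x) - f * g x)
    -- the Maurer–Cartan sum `Σ_n [f,…,f]_n / n!`
    let mc : PowerSeries B → PowerSeries B := fun f =>
      PowerSeries.mk fun k =>
        ∑ n ∈ Finset.range (k + 1), (n.factorial : ℚ)⁻¹ • PowerSeries.coeff (R := B) k (it f n 1)
    -- `S ↦ e^S − 1` is a bijection from MC elements of `(ħB⟦ħ⟧[−1], [−]_□)` to the
    -- MC elements of the abelian L∞-structure, i.e. `{T : □(1 + T) = 0}`
    Set.BijOn (fun f => expPS f - 1)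
      {f | PowerSeries.coeff (R := B) 0 f = 0 ∧ mc f = 0}
      {t | PowerSeries.coeff (R := B) 0 t = 0 ∧ boxh (1 + t) = 0} := by
  intro boxh expPS it mc
  have hexp : expPS = PowerSeries.expOf := funext fun f => by
    ext k
    simp [expPS, PowerSeries.expOf, PowerSeries.coeff_formalSum]
  have hit : ∀ f n x, it f n x = (bracketMul ℚ f ^ n) (PowerSeries.lmapCoeffs box) x := by
    intro f n
    induction n with
    | zero => intro x; rfl
    | succ n ih => intro x; rw [pow_succ', Module.End.mul_apply, bracketMul_apply, ← ih, ← ih]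
  have hmc : mc = PowerSeries.mcSeries (PowerSeries.lmapCoeffs box) := funext fun f => by
    ext k
    simp [mc, PowerSeries.mcSeries, PowerSeries.coeff_formalSum, hit]
  rw [hexp, hmc]
  exact PowerSeries.bijOn_expOf_sub_one _ fun _ _ => PowerSeries.X_pow_dvd_lmapCoeffs box

theorem stmt16
    (B : Type*) [CommRing B] [Algebra ℚ B]
    (box : B →ₗ[ℚ] B)
    (hsq : ∀ x, box (box x) = 0)
    (hone : box 1 = 0) :
    -- `□` extended coefficientwise to `B⟦ħ⟧`
    let boxh : PowerSeries B → PowerSeries B :=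
      fun f => PowerSeries.mk fun n => box (PowerSeries.coeff (R := B) n f)
    -- the exponential of a power series with vanishing constant term
    let expPS : PowerSeries B → PowerSeries B :=
      fun f => PowerSeries.mk fun k =>
        ∑ n ∈ Finset.range (k + 1), (n.factorial : ℚ)⁻¹ • PowerSeries.coeff (R := B) k (f ^ n)
    -- the iterated commutators `[⋯[□, f], …, f]`
    let it : PowerSeries B → ℕ → PowerSeries B → PowerSeries B :=
      fun f => Nat.rec (motive := fun _ => PowerSeries B → PowerSeries B)
        boxh (fun _ g x => g (f * x) - f * g x)
    -- the Maurer–Cartan sum `Σ_n [f,…,f]_n / n!`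
    let mc : PowerSeries B → PowerSeries B := fun f =>
      PowerSeries.mk fun k =>
        ∑ n ∈ Finset.range (k + 1), (n.factorial : ℚ)⁻¹ • PowerSeries.coeff (R := B) k (it f n 1)
    -- `S ↦ e^S − 1` is a bijection from MC elements of `(ħB⟦ħ⟧[−1], [−]_□)` to the
    -- MC elements of the abelian L∞-structure, i.e. `{T : □(1 + T) = 0}`
    Set.BijOn (fun f => expPS f - 1)
      {f | PowerSeries.coeff (R := B) 0 f = 0 ∧ mc f = 0}
      {t | PowerSeries.coeff (R := B) 0 t = 0 ∧ boxh (1 + t) = 0} :=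
  stmt16_general B box
end
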